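/- Let a : ℝ^d → ℂ be bounded and Lipschitz, and let (x₀^{(n)}, R_n) be a sequence with |x₀^{(n)}| + R_n + R_n^{-1} → ∞ and a(x₀^{(n)}) = 0 for each n. Let φ be a smooth bump supported in the unit ball with ‖φ‖_∞ ≤ 1, ‖∇φ‖_∞ ≤ 1. Then the functions f_n := ∇a · R_n^{-d/2} φ((· − x₀^{(n)})/R_n) (componentwise) converge weakly to 0 in L²(ℝ^d). -/

import Mathlib

open MeasureTheory Filter

open scoped ENNReal NNReal
open Metric Set

private lemma cs_integral (g h : EuclideanSpace ℝ (Fin d) → ℂ)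
    (hg : MemLp g 2 (volume : Measure (EuclideanSpace ℝ (Fin d))))
    (hh : MemLp h 2 (volume : Measure (EuclideanSpace ℝ (Fin d)))) :
    ‖∫ x, (starRingEnd ℂ) (g x) * h x‖ ≤
      (eLpNorm g 2 volume).toReal * (eLpNorm h 2 volume).toReal := by
  have key : ∫ x, (starRingEnd ℂ) (g x) * h x
      = @inner ℂ _ _ (hg.toLp g) (hh.toLp h) := by
    rw [MeasureTheory.L2.inner_def]
    refine (integral_congr_ae ?_).symm
    filter_upwards [hg.coeFn_toLp, hh.coeFn_toLp] with x h1 h2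
    rw [RCLike.inner_apply, h1, h2, mul_comm]
  rw [key]
  calc ‖@inner ℂ _ _ (hg.toLp g) (hh.toLp h)‖ ≤ ‖hg.toLp g‖ * ‖hh.toLp h‖ :=
        norm_inner_le_norm _ _
  _ = _ := by rw [Lp.norm_toLp, Lp.norm_toLp]

private lemma int_mul (g h : EuclideanSpace ℝ (Fin d) → ℂ)
    (hg : MemLp g 2 (volume : Measure (EuclideanSpace ℝ (Fin d))))
    (hh : MemLp h 2 volume) :
    Integrable (fun x => g x * h x) volume := by
  rw [← memLp_one_iff_integrable]
  have h12 : (1:ℝ≥0∞)/1 = 1/2 + 1/2 := by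
    rw [ENNReal.add_halves]; exact one_div_one
  exact hh.smul (r := 1) hg

private lemma memℒp_conj {g : EuclideanSpace ℝ (Fin d) → ℂ}
    (hg : MemLp g 2 (volume : Measure (EuclideanSpace ℝ (Fin d)))) :
    MemLp (fun x => (starRingEnd ℂ) (g x)) 2 volume := by
  refine hg.of_le (RCLike.continuous_conj.comp_aestronglyMeasurable hg.1)
    (ae_of_all _ fun x => ?_)
  simp


/-- Let `a` be bounded Lipschitz, `|x₀^{(n)}| + R_n + R_n⁻¹ → ∞` with `a(x₀^{(n)}) = 0`, and
`φ` a smooth bump supported in the unit ball with `‖φ‖_∞ ≤ 1` and `‖∇φ‖_∞ ≤ 1`. Then, for each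
component `j`, the functions `f_n = ∂_j a · R_n^{-d/2} φ((· − x₀^{(n)})/R_n)` converge weakly
to `0` in `L²(ℝ^d)`. -/
theorem bump_times_gradient_weakly_null (d : ℕ)
    (a : EuclideanSpace ℝ (Fin d) → ℂ) (Ca : ℝ) (hab : ∀ x, ‖a x‖ ≤ Ca)
    (L : NNReal) (haL : LipschitzWith L a)
    (x₀ : ℕ → EuclideanSpace ℝ (Fin d)) (R : ℕ → ℝ) (hR : ∀ n, 0 < R n)
    (hesc : Tendsto (fun n => ‖x₀ n‖ + R n + (R n)⁻¹) atTop atTop)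
    (ha0 : ∀ n, a (x₀ n) = 0)
    (φ : EuclideanSpace ℝ (Fin d) → ℂ) (hφ : ContDiff ℝ (⊤ : ℕ∞) φ)
    (hφs : Function.support φ ⊆ Metric.ball 0 1)
    (hφb : ∀ x, ‖φ x‖ ≤ 1)
    (hφg : ∀ x v : EuclideanSpace ℝ (Fin d), ‖v‖ ≤ 1 → ‖fderiv ℝ φ x v‖ ≤ 1)
    (j : Fin d)
    (f : ℕ → EuclideanSpace ℝ (Fin d) → ℂ)
    (hf : ∀ n x, f n x = fderiv ℝ a x (EuclideanSpace.single j (1:ℝ)) *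
      (((R n) ^ (-(d : ℝ) / 2) : ℝ) : ℂ) * φ ((R n)⁻¹ • (x - x₀ n))) :
    ∀ g : EuclideanSpace ℝ (Fin d) → ℂ, MemLp g 2 (volume : Measure (EuclideanSpace ℝ (Fin d))) →
      Tendsto (fun n => ∫ x, (starRingEnd ℂ) (g x) * f n x) atTop (nhds 0) := by
  intro g hg
  classical
  have hd : 0 < d := j.pos
  have hd1 : (1:ℝ) ≤ (d:ℝ) := by exact_mod_cast hd
  set ωE : ℝ := Real.sqrt Real.pi ^ d / Real.Gamma ((d:ℝ) / 2 + 1) with hωEdef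
  have hω : 0 ≤ ωE := by
    apply div_nonneg (pow_nonneg (Real.sqrt_nonneg _) _)
    exact (Real.Gamma_pos_of_pos (by positivity)).le
  haveI : Nonempty (Fin d) := ⟨j⟩
  have hvol : ∀ (x : EuclideanSpace ℝ (Fin d)) (r : ℝ),
      volume (ball x r) = (ENNReal.ofReal r)^d * ENNReal.ofReal ωE := by
    intro x r
    simpa [Fintype.card_fin] using EuclideanSpace.volume_ball (Fin d) x r
  have hvolR : ∀ (x : EuclideanSpace ℝ (Fin d)) (r : ℝ), 0 ≤ r →
      (volume (ball x r)).toReal = r^d * ωE := by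
    intro x r hr
    rw [hvol, ENNReal.toReal_mul, ENNReal.toReal_pow, ENNReal.toReal_ofReal hr,
      ENNReal.toReal_ofReal hω]
  set c : ℕ → ℝ := fun n => (L:ℝ) * (R n) ^ (-(d:ℝ)/2) with hcdef
  have hc : ∀ n, 0 ≤ c n := fun n =>
    mul_nonneg L.coe_nonneg (Real.rpow_nonneg (hR n).le _)
  -- pointwise facts
  have hfd : ∀ x, ‖fderiv ℝ a x (EuclideanSpace.single j (1:ℝ))‖ ≤ L := by
    intro x
    calc ‖fderiv ℝ a x (EuclideanSpace.single j (1:ℝ))‖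
        ≤ ‖fderiv ℝ a x‖ * ‖EuclideanSpace.single j (1:ℝ)‖ :=
          (fderiv ℝ a x).le_opNorm _
    _ ≤ (L:ℝ) * 1 := by
        apply mul_le_mul (norm_fderiv_le_of_lipschitz ℝ haL) ?_ (norm_nonneg _) L.coe_nonneg
        rw [EuclideanSpace.norm_single]; simp
    _ = (L:ℝ) := mul_one _
  have hf0 : ∀ n x, x ∉ ball (x₀ n) (R n) → f n x = 0 := by
    intro n x hx
    have hxd : R n ≤ ‖x - x₀ n‖ := by
      rw [mem_ball, dist_eq_norm] at hx; linarith [not_lt.mp hx]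
    have hφ0 : φ ((R n)⁻¹ • (x - x₀ n)) = 0 := by
      by_contra h0
      have hmem := hφs (Function.mem_support.2 h0)
      rw [mem_ball_zero_iff] at hmem
      have : (1:ℝ) ≤ ‖(R n)⁻¹ • (x - x₀ n)‖ := by
        rw [norm_smul, Real.norm_eq_abs, abs_of_pos (inv_pos.2 (hR n))]
        rw [← inv_mul_cancel₀ (hR n).ne']
        exact mul_le_mul_of_nonneg_left hxd (inv_pos.2 (hR n)).le
      linarith
    rw [hf, hφ0, mul_zero]
  have hnorm_le : ∀ n x, ‖f n x‖ ≤ (ball (x₀ n) (R n)).indicator (fun _ => c n) x := by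
    intro n x
    by_cases hx : x ∈ ball (x₀ n) (R n)
    · rw [Set.indicator_of_mem hx, hf]
      have h2 : ‖((((R n) ^ (-(d:ℝ)/2) : ℝ)) : ℂ)‖ = (R n) ^ (-(d:ℝ)/2) := by
        rw [Complex.norm_real, Real.norm_eq_abs, abs_of_nonneg (Real.rpow_nonneg (hR n).le _)]
      calc ‖fderiv ℝ a x (EuclideanSpace.single j (1:ℝ)) *
            (((R n) ^ (-(d:ℝ)/2) : ℝ) : ℂ) * φ ((R n)⁻¹ • (x - x₀ n))‖
          = ‖fderiv ℝ a x (EuclideanSpace.single j (1:ℝ))‖ *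
            ‖((((R n) ^ (-(d:ℝ)/2) : ℝ)) : ℂ)‖ * ‖φ ((R n)⁻¹ • (x - x₀ n))‖ := by
            rw [norm_mul, norm_mul]
      _ ≤ (L:ℝ) * (R n) ^ (-(d:ℝ)/2) * 1 := by
            apply mul_le_mul _ (hφb _) (norm_nonneg _)
              (mul_nonneg L.coe_nonneg (Real.rpow_nonneg (hR n).le _))
            rw [h2]
            exact mul_le_mul_of_nonneg_right (hfd x) (Real.rpow_nonneg (hR n).le _)
      _ = c n := mul_one _
    · rw [Set.indicator_of_notMem hx, hf0 n x hx, norm_zero]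
  have hmeasf : ∀ n, AEStronglyMeasurable (f n) (volume : Measure (EuclideanSpace ℝ (Fin d))) := by
    intro n
    have h1 : Measurable fun x : EuclideanSpace ℝ (Fin d) =>
        fderiv ℝ a x (EuclideanSpace.single j (1:ℝ)) := by
      apply measurable_fderiv_apply_const
    have h2 : Continuous fun x : EuclideanSpace ℝ (Fin d) => φ ((R n)⁻¹ • (x - x₀ n)) :=
      hφ.continuous.comp (by fun_prop)
    have hfn : f n = fun x => fderiv ℝ a x (EuclideanSpace.single j (1:ℝ)) *
        (((R n) ^ (-(d : ℝ) / 2) : ℝ) : ℂ) * φ ((R n)⁻¹ • (x - x₀ n)) := funext (hf n)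
    rw [hfn]
    exact ((h1.mul_const _).mul h2.measurable).aestronglyMeasurable
  have hfmem : ∀ n, MemLp (f n) 2 (volume : Measure (EuclideanSpace ℝ (Fin d))) := by
    intro n
    have hind : MemLp ((ball (x₀ n) (R n)).indicator (fun _ => c n)) 2
        (volume : Measure (EuclideanSpace ℝ (Fin d))) :=
      memLp_indicator_const 2 measurableSet_ball (c n) (Or.inr measure_ball_lt_top.ne)
    refine hind.of_le (hmeasf n) (ae_of_all _ fun x => ?_)
    exact (hnorm_le n x).trans ((Real.norm_eq_abs _) ▸ le_abs_self _)
  have hFnorm : ∀ n, (eLpNorm (f n) 2 volume).toReal ≤ (L:ℝ) * Real.sqrt ωE := by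
    intro n
    have h1 : eLpNorm (f n) 2 volume ≤
        eLpNorm ((ball (x₀ n) (R n)).indicator (fun _ => c n)) 2 volume :=
      eLpNorm_mono fun x => (hnorm_le n x).trans ((Real.norm_eq_abs _) ▸ le_abs_self _)
    have h2 : eLpNorm ((ball (x₀ n) (R n)).indicator (fun _ => c n)) 2 volume
        = ENNReal.ofReal ((L:ℝ) * Real.sqrt ωE) := by
      rw [eLpNorm_indicator_const measurableSet_ball two_ne_zero ENNReal.ofNat_ne_top, hvol]
      have htoReal : (2:ℝ≥0∞).toReal = 2 := by simp
      rw [htoReal]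
      rw [Real.enorm_eq_ofReal (hc n)]
      rw [← ENNReal.rpow_natCast (ENNReal.ofReal (R n)) d]
      rw [ENNReal.mul_rpow_of_nonneg _ _ (by norm_num : (0:ℝ) ≤ 1/2)]
      rw [← ENNReal.rpow_mul]
      rw [ENNReal.ofReal_rpow_of_pos (hR n), ENNReal.ofReal_rpow_of_nonneg hω (by norm_num)]
      rw [← ENNReal.ofReal_mul (Real.rpow_nonneg (hR n).le _),
        ← ENNReal.ofReal_mul (hc n)]
      congr 1
      rw [Real.sqrt_eq_rpow, hcdef]
      have hpow : (R n) ^ (-(d:ℝ)/2) * (R n) ^ ((d:ℝ) * (1/2)) = 1 := by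
        rw [← Real.rpow_add (hR n), show -(d:ℝ)/2 + (d:ℝ)*(1/2) = 0 by ring, Real.rpow_zero]
      calc (L:ℝ) * (R n)^(-(d:ℝ)/2) * ((R n)^((d:ℝ)*(1/2)) * ωE^((1:ℝ)/2))
          = ((R n)^(-(d:ℝ)/2) * (R n)^((d:ℝ)*(1/2))) * ((L:ℝ) * ωE^((1:ℝ)/2)) := by ring
      _ = (L:ℝ) * ωE^((1:ℝ)/2) := by rw [hpow, one_mul]
    refine ENNReal.toReal_le_of_le_ofReal (by positivity) ?_
    rw [← h2]; exact h1
  rw [NormedAddCommGroup.tendsto_nhds_zero]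
  intro ε hε
  obtain ⟨C, hCdef⟩ : ∃ C : ℝ, C = (L:ℝ) * Real.sqrt ωE + 1 := ⟨_, rfl⟩
  have hCpos : 0 < C := by rw [hCdef]; positivity
  obtain ⟨g₀, hg₀cs, hg₀close, hg₀cont, hg₀mem⟩ :=
    hg.exists_hasCompactSupport_eLpNorm_sub_le ENNReal.ofNat_ne_top
      (ε := ENNReal.ofReal (ε/(2*C)))
      (ENNReal.ofReal_pos.2 (div_pos hε (by linarith))).ne'
  have hG : (eLpNorm (g - g₀) 2 volume).toReal ≤ ε/(2*C) :=
    ENNReal.toReal_le_of_le_ofReal (div_pos hε (by linarith)).le hg₀close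
  obtain ⟨M₀, hM₀⟩ := hg₀cs.exists_bound_of_continuous hg₀cont
  obtain ⟨M, hMdef⟩ : ∃ M : ℝ, M = max M₀ 0 := ⟨_, rfl⟩
  have hM : ∀ x, ‖g₀ x‖ ≤ M := fun x => (hM₀ x).trans (hMdef ▸ le_max_left _ _)
  have hM0 : 0 ≤ M := hMdef ▸ le_max_right _ _
  obtain ⟨ρ, hρpos, hρ⟩ := hg₀cs.isBounded.subset_ball_lt 0 0
  have hg₀0 : ∀ x, x ∉ ball (0 : EuclideanSpace ℝ (Fin d)) ρ → g₀ x = 0 := fun x hx =>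
    image_eq_zero_of_notMem_tsupport fun h => hx (hρ h)
  have hsplit : ∀ n, ∫ x, (starRingEnd ℂ) (g x) * f n x =
      (∫ x, (starRingEnd ℂ) ((g - g₀) x) * f n x) + ∫ x, (starRingEnd ℂ) (g₀ x) * f n x := by
    intro n
    rw [← integral_add (int_mul _ _ (memℒp_conj (hg.sub hg₀mem)) (hfmem n))
      (int_mul _ _ (memℒp_conj hg₀mem) (hfmem n))]
    refine integral_congr_ae (ae_of_all _ fun x => ?_)
    simp only [Pi.sub_apply, map_sub]
    ring
  have hmain : ∀ n, ‖∫ x, (starRingEnd ℂ) ((g - g₀) x) * f n x‖ ≤ ε/2 := by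
    intro n
    refine (cs_integral _ _ (hg.sub hg₀mem) (hfmem n)).trans ?_
    have h1 : (eLpNorm (f n) 2 volume).toReal ≤ C := (hFnorm n).trans (by rw [hCdef]; linarith)
    calc (eLpNorm (g - g₀) 2 volume).toReal * (eLpNorm (f n) 2 volume).toReal
        ≤ (ε/(2*C)) * C := mul_le_mul hG h1 ENNReal.toReal_nonneg (div_pos hε (by linarith)).le
    _ = ε/2 := by field_simp
  have hT : ∀ n, ‖∫ x, (starRingEnd ℂ) (g₀ x) * f n x‖ ≤
      M * c n * (volume (ball (0 : EuclideanSpace ℝ (Fin d)) ρ ∩ ball (x₀ n) (R n))).toReal := by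
    intro n
    have hms : MeasurableSet (ball (0 : EuclideanSpace ℝ (Fin d)) ρ ∩ ball (x₀ n) (R n)) :=
      measurableSet_ball.inter measurableSet_ball
    have hind : Integrable ((ball (0 : EuclideanSpace ℝ (Fin d)) ρ ∩
        ball (x₀ n) (R n)).indicator (fun _ => M * c n)) volume := by
      rw [integrable_indicator_iff hms]
      exact integrableOn_const ((measure_mono inter_subset_right).trans_lt
        measure_ball_lt_top).ne
    refine (norm_integral_le_of_norm_le hind (ae_of_all _ fun x => ?_)).trans
      (le_of_eq (by rw [integral_indicator_const _ hms, smul_eq_mul, measureReal_def]; ring))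
    by_cases h1 : x ∈ ball (0 : EuclideanSpace ℝ (Fin d)) ρ ∩ ball (x₀ n) (R n)
    · rw [Set.indicator_of_mem h1, norm_mul, RCLike.norm_conj]
      have h2 := hnorm_le n x
      rw [Set.indicator_of_mem h1.2] at h2
      exact mul_le_mul (hM x) h2 (norm_nonneg _) hM0
    · rw [Set.indicator_of_notMem h1]
      by_cases hx : x ∈ ball (0 : EuclideanSpace ℝ (Fin d)) ρ
      · have hx2 : x ∉ ball (x₀ n) (R n) := fun hmem => h1 ⟨hx, hmem⟩
        rw [hf0 n x hx2]; simp
      · rw [hg₀0 x hx]; simp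
  obtain ⟨A, hAdef⟩ : ∃ A : ℝ, A = M * (L:ℝ) * ωE + 1 := ⟨_, rfl⟩
  have hMLω : 0 ≤ M * (L:ℝ) * ωE := mul_nonneg (mul_nonneg hM0 L.coe_nonneg) hω
  have hA1 : 1 ≤ A := by rw [hAdef]; linarith
  have hApos : 0 < A := by linarith
  obtain ⟨B, hBdef⟩ : ∃ B : ℝ, B = A * (ρ^d + 1) := ⟨_, rfl⟩
  have hρd : 0 ≤ ρ^d := pow_nonneg hρpos.le d
  have hBpos : 0 < B := by rw [hBdef]; exact mul_pos hApos (by positivity)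
  have hεA : 0 < ε / (4*A) := div_pos hε (by linarith)
  obtain ⟨r₀, hr₀def⟩ : ∃ r₀ : ℝ, r₀ = min 1 ((ε/(4*A))^2) := ⟨_, rfl⟩
  have hr₀pos : 0 < r₀ := hr₀def ▸ lt_min one_pos (pow_pos hεA 2)
  have hr₀le1 : r₀ ≤ 1 := hr₀def ▸ min_le_left _ _
  obtain ⟨R₀, hR₀def⟩ : ∃ R₀ : ℝ, R₀ = max 1 ((4*B/ε)^2) := ⟨_, rfl⟩
  have hR₀ge1 : 1 ≤ R₀ := hR₀def ▸ le_max_left _ _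
  have hR₀pos : 0 < R₀ := lt_of_lt_of_le one_pos hR₀ge1
  filter_upwards [hesc.eventually_ge_atTop (ρ + R₀ + R₀ + r₀⁻¹ + 1)] with n hn
  have hcase : R₀ < R n ∨ R n < r₀ ∨ ρ + R n ≤ ‖x₀ n‖ := by
    by_contra hcon
    push_neg at hcon
    obtain ⟨h1, h2, h3⟩ := hcon
    have h4 : (R n)⁻¹ ≤ r₀⁻¹ := inv_anti₀ hr₀pos h2
    linarith
  set s : ℝ := (volume (ball (0 : EuclideanSpace ℝ (Fin d)) ρ ∩ ball (x₀ n) (R n))).toReal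
    with hsdef
  have hs0 : 0 ≤ s := ENNReal.toReal_nonneg
  have hTn : M * c n * s < ε/2 := by
    rcases hcase with hcs | hcs | hcs
    · have h1R : (1:ℝ) ≤ R n := le_trans hR₀ge1 hcs.le
      have hsρ : s ≤ ρ^d * ωE := by
        have hmono : volume (ball (0:EuclideanSpace ℝ (Fin d)) ρ ∩ ball (x₀ n) (R n)) ≤
            volume (ball (0:EuclideanSpace ℝ (Fin d)) ρ) := measure_mono inter_subset_left
        have h5 := ENNReal.toReal_mono measure_ball_lt_top.ne hmono
        rwa [hvolR _ _ hρpos.le] at h5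
      have hstep1 : M * c n * s ≤ (M * (L:ℝ) * ωE * ρ^d) * (R n)^(-(d:ℝ)/2) := by
        calc M * c n * s ≤ M * c n * (ρ^d * ωE) :=
              mul_le_mul_of_nonneg_left hsρ (mul_nonneg hM0 (hc n))
        _ = (M * (L:ℝ) * ωE * ρ^d) * (R n)^(-(d:ℝ)/2) := by rw [hcdef]; ring
      have hexp : (R n)^(-(d:ℝ)/2) ≤ (R n)^(-(1:ℝ)/2) :=
        Real.rpow_le_rpow_of_exponent_le h1R (by linarith)
      have hmono2 : (R n)^(-(1:ℝ)/2) ≤ R₀^(-(1:ℝ)/2) := by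
        rw [show (-(1:ℝ)/2) = -(1/2) by ring, Real.rpow_neg (by linarith : (0:ℝ) ≤ R n),
          Real.rpow_neg hR₀pos.le]
        exact inv_anti₀ (Real.rpow_pos_of_pos hR₀pos _)
          (Real.rpow_le_rpow hR₀pos.le hcs.le (by norm_num))
      have hbpos : 0 < 4*B/ε := div_pos (by linarith) hε
      have hR₀b : R₀^(-(1:ℝ)/2) ≤ ε/(4*B) := by
        have h1 : ((4*B/ε)^2 : ℝ) ≤ R₀ := hR₀def ▸ le_max_right _ _
        have h2 : (4*B/ε) ≤ R₀^((1:ℝ)/2) := by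
          have h3 := Real.rpow_le_rpow (sq_nonneg (4*B/ε)) h1 (by norm_num : (0:ℝ) ≤ 1/2)
          rwa [← Real.rpow_natCast (4*B/ε) 2, ← Real.rpow_mul hbpos.le,
            show ((2:ℕ):ℝ) * (1/2) = 1 by norm_num, Real.rpow_one] at h3
        rw [show (-(1:ℝ)/2) = -(1/2) by ring, Real.rpow_neg hR₀pos.le]
        calc (R₀^((1:ℝ)/2))⁻¹ ≤ (4*B/ε)⁻¹ :=
              inv_anti₀ hbpos h2
        _ = ε/(4*B) := by rw [inv_div]
      have hcoef : M * (L:ℝ) * ωE * ρ^d ≤ B := by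
        calc M * (L:ℝ) * ωE * ρ^d ≤ A * (ρ^d + 1) :=
              mul_le_mul (by linarith) (by linarith) hρd hApos.le
        _ = B := hBdef.symm
      have hfin : M * c n * s ≤ ε/4 := by
        calc M * c n * s ≤ (M * (L:ℝ) * ωE * ρ^d) * (R n)^(-(d:ℝ)/2) := hstep1
        _ ≤ B * R₀^(-(1:ℝ)/2) :=
            mul_le_mul hcoef (hexp.trans hmono2)
              (Real.rpow_nonneg (by linarith : (0:ℝ) ≤ R n) _) hBpos.le
        _ ≤ B * (ε/(4*B)) := mul_le_mul_of_nonneg_left hR₀b hBpos.le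
        _ = ε/4 := by
            have hBne : B ≠ 0 := hBpos.ne'
            field_simp
      linarith
    · have hR1 : R n ≤ 1 := hcs.le.trans hr₀le1
      have hsR : s ≤ (R n)^d * ωE := by
        have hmono : volume (ball (0:EuclideanSpace ℝ (Fin d)) ρ ∩ ball (x₀ n) (R n)) ≤
            volume (ball (x₀ n) (R n)) := measure_mono inter_subset_right
        have h5 := ENNReal.toReal_mono measure_ball_lt_top.ne hmono
        rwa [hvolR _ _ (hR n).le] at h5
      have key : (R n)^(-(d:ℝ)/2) * (R n)^(d:ℕ) = (R n)^((d:ℝ)/2) := by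
        rw [← Real.rpow_natCast (R n) d, ← Real.rpow_add (hR n)]
        congr 1
        ring
      have hstep : M * c n * s ≤ (M * (L:ℝ) * ωE) * (R n)^((d:ℝ)/2) := by
        calc M * c n * s ≤ M * c n * ((R n)^d * ωE) :=
              mul_le_mul_of_nonneg_left hsR (mul_nonneg hM0 (hc n))
        _ = (M * (L:ℝ) * ωE) * ((R n)^(-(d:ℝ)/2) * (R n)^(d:ℕ)) := by rw [hcdef]; ring
        _ = (M * (L:ℝ) * ωE) * (R n)^((d:ℝ)/2) := by rw [key]
      have hexp2 : (R n)^((d:ℝ)/2) ≤ (R n)^((1:ℝ)/2) :=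
        Real.rpow_le_rpow_of_exponent_ge (hR n) hR1 (by linarith)
      have hr₀b : (R n)^((1:ℝ)/2) ≤ ε/(4*A) := by
        have h1 : (R n)^((1:ℝ)/2) ≤ ((ε/(4*A))^2)^((1:ℝ)/2) :=
          Real.rpow_le_rpow (hR n).le (hcs.le.trans (hr₀def ▸ min_le_right _ _)) (by norm_num)
        rwa [← Real.rpow_natCast (ε/(4*A)) 2, ← Real.rpow_mul hεA.le,
          show ((2:ℕ):ℝ) * (1/2) = 1 by norm_num, Real.rpow_one] at h1
      have hfin : M * c n * s ≤ ε/4 := by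
        calc M * c n * s ≤ (M * (L:ℝ) * ωE) * (R n)^((d:ℝ)/2) := hstep
        _ ≤ A * (ε/(4*A)) :=
            mul_le_mul (by linarith) (hexp2.trans hr₀b)
              (Real.rpow_nonneg (hR n).le _) hApos.le
        _ = ε/4 := by
            have hAne : A ≠ 0 := hApos.ne'
            field_simp
      linarith
    · have hempty : ball (0:EuclideanSpace ℝ (Fin d)) ρ ∩ ball (x₀ n) (R n) = ∅ := by
        rw [Set.eq_empty_iff_forall_notMem]
        rintro x ⟨hx1, hx2⟩
        rw [mem_ball_zero_iff] at hx1
        rw [mem_ball, dist_eq_norm] at hx2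
        have h5 : ‖x₀ n‖ - ‖x‖ ≤ ‖x₀ n - x‖ := norm_sub_norm_le _ _
        rw [norm_sub_rev] at h5
        linarith
      have hs00 : s = 0 := by rw [hsdef, hempty]; simp
      rw [hs00, mul_zero]
      linarith
  calc ‖∫ x, (starRingEnd ℂ) (g x) * f n x‖
      = ‖(∫ x, (starRingEnd ℂ) ((g - g₀) x) * f n x) +
          ∫ x, (starRingEnd ℂ) (g₀ x) * f n x‖ := by rw [hsplit n]
  _ ≤ ‖∫ x, (starRingEnd ℂ) ((g - g₀) x) * f n x‖ +
      ‖∫ x, (starRingEnd ℂ) (g₀ x) * f n x‖ := norm_add_le _ _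
  _ < ε := by
      have h6 := hmain n
      have h7 := hT n
      rw [← hsdef] at h7
      linarith
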